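/- arXiv:2208.10873 — 8 statements merged into one kernel-verified Lean document; each statement's English description precedes it below -/
import Mathlib

section
/- Let φ be a Lie algebra automorphism of sl(2,ℝ) and let M be its matrix with respect to a basis (v₁,v₂,v₃) satisfying [v₁,v₂] = v₃, [v₁,v₃] = v₂, [v₂,v₃] = −v₁. Then det(M) = 1 and Mᵀ · I₂,₁ · M = I₂,₁, where I₂,₁ = diag(1,1,−1); that is, M belongs to SO(2,1). -/
/-!
In the coordinates given by `v` the bracket is `⁅x, y⁆ = -I₂,₁ (x × y)`. A linear map transforms
cross products by its cofactor matrix, `Ma × Mb = (adj M)ᵀ (a × b)`, and cross products span, so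
compatibility of `M` with the bracket means `M I₂,₁ = I₂,₁ (adj M)ᵀ`, i.e. `adj M = I₂,₁ Mᵀ I₂,₁`.
Taking determinants gives `(det M)² = det M`, hence `det M = 1` as `M` is invertible, and then
`adj M * M = 1` reads `Mᵀ I₂,₁ M = I₂,₁`.
-/

open Matrix

variable {R : Type*} [CommRing R]

theorem mulVec_cross_mulVec (M : Matrix (Fin 3) (Fin 3) R) (a b : Fin 3 → R) :
    (M *ᵥ a) ⨯₃ (M *ᵥ b) = M.adjugateᵀ *ᵥ (a ⨯₃ b) := by
  ext i
  fin_cases i <;>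
    simp only [cross_apply, adjugate_fin_three, mulVec, dotProduct, Fin.sum_univ_three,
      transpose_apply, of_apply, Fin.isValue, Fin.zero_eta, Fin.mk_one, Fin.reduceFinMk,
      cons_val', cons_val_fin_one, cons_val_zero, cons_val_one, cons_val] <;>
    ring

theorem exists_cross_eq_single (k : Fin 3) : ∃ a b : Fin 3 → R, a ⨯₃ b = Pi.single k 1 := by
  fin_cases k
  · exact ⟨Pi.single 1 1, Pi.single 2 1, by ext i; fin_cases i <;> simp [cross_apply]⟩
  · exact ⟨Pi.single 2 1, Pi.single 0 1, by ext i; fin_cases i <;> simp [cross_apply]⟩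
  · exact ⟨Pi.single 0 1, Pi.single 1 1, by ext i; fin_cases i <;> simp [cross_apply]⟩

theorem ext_of_mulVec_cross {m : Type*} {A B : Matrix m (Fin 3) R}
    (h : ∀ a b, A *ᵥ (a ⨯₃ b) = B *ᵥ (a ⨯₃ b)) : A = B := by
  refine ext_of_mulVec_single fun k => ?_
  obtain ⟨a, b, hab⟩ := exists_cross_eq_single (R := R) k
  rw [← hab, h]

theorem diagonal_one_one_neg_one_mul_self :
    diagonal ![(1 : R), 1, -1] * diagonal ![1, 1, -1] = 1 := by
  rw [diagonal_mul_diagonal, ← diagonal_one]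
  congr 1
  ext i
  fin_cases i <;> simp

theorem det_eq_one_and_transpose_mul_mul_eq_of_adjugate_eq {M J : Matrix (Fin 3) (Fin 3) R}
    (hJ : J * J = 1) (hM : IsUnit M.det) (hadj : M.adjugate = J * Mᵀ * J) :
    M.det = 1 ∧ Mᵀ * J * M = J := by
  have hdetJ : J.det * J.det = 1 := by rw [← det_mul, hJ, det_one]
  have hdet : M.det * M.det = M.det * 1 := by
    calc M.det * M.det = M.adjugate.det := by simp [det_adjugate, sq]
      _ = J.det * J.det * M.det := by rw [hadj, det_mul, det_mul, det_transpose]; ring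
      _ = M.det * 1 := by rw [hdetJ, one_mul, mul_one]
  have hdet1 : M.det = 1 := hM.mul_left_cancel hdet
  refine ⟨hdet1, ?_⟩
  have hinv : J * Mᵀ * J * M = 1 := by rw [← hadj, adjugate_mul, hdet1, one_smul]
  calc Mᵀ * J * M = J * (J * Mᵀ * J * M) := by simp only [← mul_assoc, hJ, one_mul]
    _ = J := by rw [hinv, mul_one]

section LieAlgebra

variable {L : Type*} [LieRing L] [LieAlgebra R L] {v : Module.Basis (Fin 3) R L}

theorem equivFun_lie_eq_neg_mulVec_cross
    (h01 : ⁅v 0, v 1⁆ = v 2) (h02 : ⁅v 0, v 2⁆ = v 1) (h12 : ⁅v 1, v 2⁆ = -v 0) (x y : L) :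
    v.equivFun ⁅x, y⁆ = -(diagonal ![1, 1, -1] *ᵥ (v.equivFun x ⨯₃ v.equivFun y)) := by
  have h10 : ⁅v 1, v 0⁆ = -v 2 := by rw [← lie_skew, h01]
  have h20 : ⁅v 2, v 0⁆ = -v 1 := by rw [← lie_skew, h02]
  have h21 : ⁅v 2, v 1⁆ = v 0 := by rw [← lie_skew, h12, neg_neg]
  rw [← v.sum_equivFun x, ← v.sum_equivFun y]
  simp only [Fin.sum_univ_three, lie_add, add_lie, lie_smul, smul_lie, lie_self, h01, h02, h12,
    h10, h20, h21, map_add, map_smul, map_neg]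
  ext i
  fin_cases i <;> simp [cross_apply, mulVec, dotProduct, Fin.sum_univ_three, add_comm]

theorem adjugate_toMatrix_lieHom
    (h01 : ⁅v 0, v 1⁆ = v 2) (h02 : ⁅v 0, v 2⁆ = v 1) (h12 : ⁅v 1, v 2⁆ = -v 0)
    (φ : L →ₗ⁅R⁆ L) :
    (LinearMap.toMatrix v v φ).adjugate =
      diagonal ![1, 1, -1] * (LinearMap.toMatrix v v φ)ᵀ * diagonal ![1, 1, -1] := by
  set M := LinearMap.toMatrix v v φ
  set J : Matrix (Fin 3) (Fin 3) R := diagonal ![1, 1, -1]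
  have hφ (x : L) : v.equivFun (φ x) = M *ᵥ v.equivFun x := by
    simp only [M, v.equivFun_apply, LinearMap.toMatrix_mulVec_repr, LieHom.coe_toLinearMap]
  have hMJ : M * J = J * M.adjugateᵀ := by
    refine ext_of_mulVec_cross fun a b => ?_
    obtain ⟨x, rfl⟩ := v.equivFun.surjective a
    obtain ⟨y, rfl⟩ := v.equivFun.surjective b
    have := congrArg v.equivFun (φ.map_lie x y)
    simpa only [hφ, equivFun_lie_eq_neg_mulVec_cross h01 h02 h12, mulVec_cross_mulVec,
      mulVec_neg, neg_inj, mulVec_mulVec] using this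
  have hadjT : M.adjugateᵀ = J * M * J := by
    rw [mul_assoc, hMJ, ← mul_assoc, diagonal_one_one_neg_one_mul_self, one_mul]
  rw [← transpose_transpose M.adjugate, hadjT, transpose_mul, transpose_mul, diagonal_transpose,
    mul_assoc]

end LieAlgebra

/-- A Lie algebra automorphism of `sl(2,ℝ)`, written as a matrix `M` with respect to a basis
`(v₁,v₂,v₃)` satisfying `[v₁,v₂]=v₃`, `[v₁,v₃]=v₂`, `[v₂,v₃]=−v₁`, satisfies `det M = 1`
and `Mᵀ·I₂,₁·M = I₂,₁` where `I₂,₁ = diag(1,1,−1)`; i.e. `M ∈ SO(2,1)`. -/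
theorem sl2R_automorphism_in_SO21
    (v : Module.Basis (Fin 3) ℝ (LieAlgebra.SpecialLinear.sl (Fin 2) ℝ))
    (h12 : ⁅v 0, v 1⁆ = v 2)
    (h13 : ⁅v 0, v 2⁆ = v 1)
    (h23 : ⁅v 1, v 2⁆ = -(v 0))
    (φ : LieAlgebra.SpecialLinear.sl (Fin 2) ℝ →ₗ[ℝ] LieAlgebra.SpecialLinear.sl (Fin 2) ℝ)
    (hφbij : Function.Bijective φ)
    (hφlie : ∀ x y : LieAlgebra.SpecialLinear.sl (Fin 2) ℝ, φ ⁅x, y⁆ = ⁅φ x, φ y⁆)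
    (M : Matrix (Fin 3) (Fin 3) ℝ)
    (hM : M = LinearMap.toMatrix v v φ) :
    M.det = 1 ∧
    Mᵀ * Matrix.diagonal ![(1 : ℝ), 1, -1] * M = Matrix.diagonal ![(1 : ℝ), 1, -1] := by
  let φLie : LieAlgebra.SpecialLinear.sl (Fin 2) ℝ →ₗ⁅ℝ⁆ LieAlgebra.SpecialLinear.sl (Fin 2) ℝ :=
    { φ with map_lie' := hφlie _ _ }
  subst hM
  exact det_eq_one_and_transpose_mul_mul_eq_of_adjugate_eq diagonal_one_one_neg_one_mul_self
    (LinearEquiv.isUnit_det (LinearEquiv.ofBijective φ hφbij) v v)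
    (adjugate_toMatrix_lieHom h12 h13 h23 φLie)
end

section
/- Let ν₁, ν₂, ν₃ be real numbers with (ν₂ − ν₃)(ν₃ − ν₁) < 0, i.e. ν₃ < min{ν₁,ν₂} or ν₃ > max{ν₁,ν₂}. Then there exist real λ, β such that λ + βν₁ > 0, λ + βν₂ > 0, and λ + βν₃ < 0; consequently the quadratic form Q(z) = (λ + βν₁)z₁² + (λ + βν₂)z₂² − (λ + βν₃)z₃² is positive definite and is a first integral of the vector field E(z) = ((ν₂−ν₃) z₂z₃, (ν₃−ν₁) z₁z₃, (ν₂−ν₁) z₁z₂), so every maximal solution of ż = E(z) is defined on all of ℝ. -/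
/-!
Since `ν₃` lies outside the interval between `ν₁` and `ν₂`, an affine function `λ + βν` can be made
positive at `ν₁, ν₂` and negative at `ν₃`; then `Q = (λ + βν₁) z₁² + (λ + βν₂) z₂² - (λ + βν₃) z₃²`
is positive definite, and it is a first integral of the Euler–Arnold field for every `λ, β`.
Its level sets are therefore compact. Multiply the field by a Lipschitz cutoff equal to `1` on a
ball containing the level set of the initial point: the new field is globally Lipschitz and
bounded, so Picard–Lindelöf gives solutions on arbitrarily long time intervals, which glue to a
global one. Being a pointwise multiple of the old field, the new one still has `Q` as a first
integral, so this solution never leaves the level set, where it solves the original equation.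
Uniqueness identifies it with any given local solution.
-/

open Set Metric Bornology
open scoped NNReal Topology

section FirstIntegral

variable {E : Type*} [NormedAddCommGroup E] [NormedSpace ℝ E]

def IsFirstIntegral (Q : E → ℝ) (f : E → E) : Prop :=
  Differentiable ℝ Q ∧ ∀ x, fderiv ℝ Q x (f x) = 0

theorem IsFirstIntegral.of_eq_smul {Q : E → ℝ} {f g : E → E} (hQ : IsFirstIntegral Q f)
    (hg : ∀ x, ∃ c : ℝ, g x = c • f x) : IsFirstIntegral Q g := by
  refine ⟨hQ.1, fun x => ?_⟩
  obtain ⟨c, hc⟩ := hg x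
  rw [hc, map_smul, hQ.2 x, smul_zero]

theorem IsFirstIntegral.eq_of_hasDerivAt {Q : E → ℝ} {f : E → E} (hQ : IsFirstIntegral Q f)
    {γ : ℝ → E} {s : Set ℝ} (hs : IsOpen s) (hs' : IsPreconnected s)
    (hγ : ∀ t ∈ s, HasDerivAt γ (f (γ t)) t) {t t' : ℝ} (ht : t ∈ s) (ht' : t' ∈ s) :
    Q (γ t) = Q (γ t') := by
  have hd : ∀ t ∈ s, HasDerivAt (fun t => Q (γ t)) 0 t := fun t ht => by
    have h := (hQ.1 (γ t)).hasFDerivAt.comp_hasDerivAt t (hγ t ht)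
    rw [hQ.2] at h
    exact h
  exact hs.is_const_of_deriv_eq_zero hs'
    (fun t ht => (hd t ht).differentiableAt.differentiableWithinAt) (fun t ht => (hd t ht).deriv)
    ht ht'

end FirstIntegral

section Cutoff

variable {α E F : Type*} [NormedAddCommGroup E] [NormedAddCommGroup F] [NormedSpace ℝ F]

theorem LipschitzOnWith.lipschitzWith_smul_of_eqOn_zero [PseudoMetricSpace α] {φ : α → ℝ}
    {f : α → F} {s : Set α} {Kφ K M : ℝ≥0} (hφ : LipschitzWith Kφ φ) (hφ1 : ∀ x, |φ x| ≤ 1)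
    (hφs : EqOn φ 0 sᶜ) (hf : LipschitzOnWith K f s) (hfM : ∀ x ∈ s, ‖f x‖ ≤ M) :
    LipschitzWith (Kφ * M + K) (fun x => φ x • f x) := by
  have key : ∀ x ∈ s, ∀ y, dist (φ x • f x) (φ y • f y) ≤ (Kφ * M + K) * dist x y := by
    intro x hx y
    have hφxy : |φ x - φ y| ≤ Kφ * dist x y := by
      simpa [Real.dist_eq] using hφ.dist_le_mul x y
    have hMx := hfM x hx
    by_cases hy : y ∈ s
    · calc dist (φ x • f x) (φ y • f y) = ‖(φ x - φ y) • f x + φ y • (f x - f y)‖ := by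
            rw [dist_eq_norm, sub_smul, smul_sub]; abel_nf
        _ ≤ |φ x - φ y| * ‖f x‖ + |φ y| * ‖f x - f y‖ := by
            simpa only [norm_smul, Real.norm_eq_abs] using
              norm_add_le ((φ x - φ y) • f x) (φ y • (f x - f y))
        _ ≤ Kφ * dist x y * M + 1 * (K * dist x y) := by
            gcongr
            · exact hφ1 y
            · simpa only [dist_eq_norm] using hf.dist_le_mul x hx y hy
        _ = _ := by ring
    · calc dist (φ x • f x) (φ y • f y) = |φ x - φ y| * ‖f x‖ := by
            simp [hφs hy, dist_eq_norm, norm_smul]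
        _ ≤ Kφ * dist x y * M := by gcongr
        _ ≤ _ := by nlinarith [dist_nonneg (x := x) (y := y), K.2]
  refine LipschitzWith.of_dist_le_mul fun x y => ?_
  by_cases hx : x ∈ s
  · exact key x hx y
  by_cases hy : y ∈ s
  · rw [dist_comm, dist_comm x]
    exact key y hy x
  · simp only [hφs hx, hφs hy, Pi.zero_apply, zero_smul, dist_self]
    positivity

theorem norm_smul_le_of_eqOn_zero {φ : α → ℝ} {f : α → F} {s : Set α} {M : ℝ}
    (hφ1 : ∀ x, |φ x| ≤ 1) (hφs : EqOn φ 0 sᶜ) (hfM : ∀ x ∈ s, ‖f x‖ ≤ M) (hM : 0 ≤ M) (x : α) :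
    ‖φ x • f x‖ ≤ M := by
  by_cases hx : x ∈ s
  · calc ‖φ x • f x‖ = |φ x| * ‖f x‖ := by rw [norm_smul, Real.norm_eq_abs]
      _ ≤ 1 * M := by gcongr; exacts [hφ1 x, hfM x hx]
      _ = M := one_mul M
  · simp [hφs hx, hM]

noncomputable def ballCutoff (R : ℝ) (x : E) : ℝ :=
  projIcc (0 : ℝ) 1 zero_le_one (R + 1 - ‖x‖)

theorem lipschitzWith_ballCutoff (R : ℝ) : LipschitzWith 1 (ballCutoff (E := E) R) :=
  LipschitzWith.of_dist_le_mul fun x y => by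
    calc dist (ballCutoff R x) (ballCutoff R y) ≤ dist (R + 1 - ‖x‖) (R + 1 - ‖y‖) := by
          have := (LipschitzWith.projIcc zero_le_one).dist_le_mul (R + 1 - ‖x‖) (R + 1 - ‖y‖)
          rwa [NNReal.coe_one, one_mul, Subtype.dist_eq] at this
      _ ≤ 1 * dist x y := by
          rw [Real.dist_eq, one_mul, dist_eq_norm]
          simpa [abs_sub_comm] using abs_norm_sub_norm_le x y

theorem abs_ballCutoff_le_one (R : ℝ) (x : E) : |ballCutoff R x| ≤ 1 := by
  obtain ⟨h₀, h₁⟩ := (projIcc (0 : ℝ) 1 zero_le_one (R + 1 - ‖x‖)).2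
  exact abs_le.2 ⟨by unfold ballCutoff; linarith, h₁⟩

theorem ballCutoff_eqOn_zero (R : ℝ) : EqOn (ballCutoff (E := E) R) 0 (closedBall 0 (R + 1))ᶜ :=
  fun x hx => by
    have : R + 1 - ‖x‖ ≤ 0 := by simp at hx; linarith
    simp [ballCutoff, projIcc_of_le_left zero_le_one this]

theorem ballCutoff_eq_one {R : ℝ} {x : E} (hx : x ∈ closedBall 0 R) : ballCutoff R x = 1 := by
  have : 1 ≤ R + 1 - ‖x‖ := by simp at hx; linarith
  simp [ballCutoff, projIcc_of_right_le zero_le_one this]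

theorem LocallyLipschitz.exists_lipschitzWith_ballCutoff_smul [ProperSpace E] {f : E → F}
    (hf : LocallyLipschitz f) (R : ℝ) :
    ∃ K M : ℝ≥0, LipschitzWith K (fun x => ballCutoff R x • f x) ∧
      ∀ x, ‖ballCutoff R x • f x‖ ≤ M := by
  have hs := isCompact_closedBall (0 : E) (R + 1)
  obtain ⟨K, hK⟩ := hf.locallyLipschitzOn.exists_lipschitzOnWith_of_compact hs
  obtain ⟨C, hC⟩ := hs.exists_bound_of_continuousOn hf.continuous.continuousOn
  have hCM : ∀ x ∈ closedBall 0 (R + 1), ‖f x‖ ≤ C.toNNReal :=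
    fun x hx => (hC x hx).trans (Real.le_coe_toNNReal C)
  exact ⟨_, _, hK.lipschitzWith_smul_of_eqOn_zero (lipschitzWith_ballCutoff R)
    (abs_ballCutoff_le_one R) (ballCutoff_eqOn_zero R) hCM,
    norm_smul_le_of_eqOn_zero (abs_ballCutoff_le_one R) (ballCutoff_eqOn_zero R) hCM C.toNNReal.2⟩

end Cutoff

section Completeness

variable {E : Type*} [NormedAddCommGroup E] [NormedSpace ℝ E]

theorem LipschitzWith.exists_forall_mem_Ioo_hasDerivAt [CompleteSpace E] {f : E → E}
    {K M : ℝ≥0} (hf : LipschitzWith K f) (hM : ∀ x, ‖f x‖ ≤ M) (t₀ : ℝ) (x₀ : E) (T : ℝ≥0) :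
    ∃ γ : ℝ → E, γ t₀ = x₀ ∧ ∀ t ∈ Ioo (t₀ - T) (t₀ + T), HasDerivAt γ (f (γ t)) t := by
  have ht₀ : t₀ ∈ Icc (t₀ - T) (t₀ + T) := ⟨by linarith [T.2], by linarith [T.2]⟩
  have hpl : IsPicardLindelof (fun _ => f) ⟨t₀, ht₀⟩ x₀ (M * T) 0 M K :=
    { lipschitzOnWith := fun _ _ => hf.lipschitzOnWith
      continuousOn := fun _ _ => continuousOn_const
      norm_le := fun _ _ x _ => hM x
      mul_max_le := by simp }
  obtain ⟨γ, hγ₀, hγ⟩ := hpl.exists_eq_forall_mem_Icc_hasDerivWithinAt₀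
  exact ⟨γ, hγ₀, fun t ht => (hγ t (Ioo_subset_Icc_self ht)).hasDerivAt (Icc_mem_nhds ht.1 ht.2)⟩

theorem LipschitzWith.exists_forall_hasDerivAt [CompleteSpace E] {f : E → E} {K M : ℝ≥0}
    (hf : LipschitzWith K f) (hM : ∀ x, ‖f x‖ ≤ M) (t₀ : ℝ) (x₀ : E) :
    ∃ γ : ℝ → E, γ t₀ = x₀ ∧ ∀ t, HasDerivAt γ (f (γ t)) t := by
  choose γ hγ₀ hγ using hf.exists_forall_mem_Ioo_hasDerivAt hM t₀ x₀
  have hγ_eq : ∀ {T T' : ℝ≥0}, T ≤ T' → EqOn (γ T) (γ T') (Ioo (t₀ - T) (t₀ + T)) := by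
    intro T T' hTT' t ht
    have : (T : ℝ) ≤ T' := hTT'
    have hsub : Ioo (t₀ - T) (t₀ + T) ⊆ Ioo (t₀ - T') (t₀ + T') :=
      Ioo_subset_Ioo (by linarith) (by linarith)
    exact ODE_solution_unique_of_mem_Ioo (v := fun _ => f) (s := fun _ => univ)
      (fun _ _ => hf.lipschitzOnWith) ⟨by linarith [ht.1, ht.2], by linarith [ht.1, ht.2]⟩
      (fun t ht => ⟨hγ T t ht, trivial⟩) (fun t ht => ⟨hγ T' t (hsub ht), trivial⟩)
      ((hγ₀ T).trans (hγ₀ T').symm) ht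
  have hmem : ∀ {t : ℝ} {T : ℝ≥0}, ‖t - t₀‖₊ < T → t ∈ Ioo (t₀ - T) (t₀ + T) := by
    intro t T h
    rw [← NNReal.coe_lt_coe, coe_nnnorm, Real.norm_eq_abs, abs_lt] at h
    constructor <;> linarith
  refine ⟨fun t => γ (‖t - t₀‖₊ + 1) t, hγ₀ _, fun t => ?_⟩
  have hev : (fun s => γ (‖s - t₀‖₊ + 1) s) =ᶠ[𝓝 t] γ (‖t - t₀‖₊ + 2) := by
    filter_upwards [ball_mem_nhds t one_pos] with s hs
    refine hγ_eq ?_ (hmem (lt_add_one _))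
    rw [mem_ball, Real.dist_eq] at hs
    rw [← NNReal.coe_le_coe]
    push_cast [Real.norm_eq_abs]
    linarith [abs_sub_le s t t₀]
  have h := (hγ _ t (hmem (by simp))).congr_of_eventuallyEq hev
  rwa [← hev.eq_of_nhds] at h

theorem IsFirstIntegral.exists_forall_hasDerivAt [ProperSpace E] {f : E → E} {Q : E → ℝ}
    (hf : LocallyLipschitz f) (hQ : IsFirstIntegral Q f) (t₀ : ℝ) (x₀ : E)
    (hx₀ : IsBounded (Q ⁻¹' {Q x₀})) :
    ∃ w : ℝ → E, w t₀ = x₀ ∧ ∀ t, HasDerivAt w (f (w t)) t := by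
  obtain ⟨R, hR⟩ := hx₀.subset_closedBall 0
  obtain ⟨K, M, hK, hM⟩ := hf.exists_lipschitzWith_ballCutoff_smul R
  obtain ⟨w, hw₀, hw⟩ := hK.exists_forall_hasDerivAt hM t₀ x₀
  have hwR : ∀ t, w t ∈ closedBall 0 R := fun t => hR <| by
    rw [mem_preimage, mem_singleton_iff, ← hw₀]
    exact (hQ.of_eq_smul fun x => ⟨_, rfl⟩).eq_of_hasDerivAt isOpen_univ isPreconnected_univ
      (fun t _ => hw t) trivial trivial
  exact ⟨w, hw₀, fun t => by simpa [ballCutoff_eq_one (hwR t)] using hw t⟩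

theorem IsFirstIntegral.exists_eqOn_forall_hasDerivAt [ProperSpace E] {f : E → E} {Q : E → ℝ}
    (hf : LocallyLipschitz f) (hQ : IsFirstIntegral Q f) (hQb : ∀ c, IsBounded (Q ⁻¹' {c}))
    {γ : ℝ → E} {a b : ℝ} (hγ : ∀ t ∈ Ioo a b, HasDerivAt γ (f (γ t)) t) :
    ∃ w : ℝ → E, EqOn w γ (Ioo a b) ∧ ∀ t, HasDerivAt w (f (w t)) t := by
  rcases (Ioo a b).eq_empty_or_nonempty with hab | ⟨t₀, ht₀⟩
  · obtain ⟨w, -, hw⟩ := hQ.exists_forall_hasDerivAt hf 0 0 (hQb _)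
    exact ⟨w, hab ▸ eqOn_empty _ _, hw⟩
  obtain ⟨w, hw₀, hw⟩ := hQ.exists_forall_hasDerivAt hf t₀ (γ t₀) (hQb _)
  set S := Q ⁻¹' {Q (γ t₀)}
  obtain ⟨K, hK⟩ := hf.locallyLipschitzOn.exists_lipschitzOnWith_of_compact
    (isCompact_of_isClosed_isBounded (isClosed_singleton.preimage hQ.1.continuous) (hQb _))
  refine ⟨w, ODE_solution_unique_of_mem_Ioo (v := fun _ => f) (s := fun _ => S)
    (fun _ _ => hK) ht₀ (fun t _ => ⟨hw t, ?_⟩) (fun t ht => ⟨hγ t ht, ?_⟩) hw₀, hw⟩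
  · rw [mem_preimage, mem_singleton_iff, ← hw₀]
    exact hQ.eq_of_hasDerivAt isOpen_univ isPreconnected_univ (fun t _ => hw t) trivial trivial
  · exact hQ.eq_of_hasDerivAt isOpen_Ioo isPreconnected_Ioo hγ ht ht₀

end Completeness

def eulerArnoldField (ν₁ ν₂ ν₃ : ℝ) (x : ℝ × ℝ × ℝ) : ℝ × ℝ × ℝ :=
  ((ν₂ - ν₃) * x.2.1 * x.2.2, (ν₃ - ν₁) * x.1 * x.2.2, (ν₂ - ν₁) * x.1 * x.2.1)

def eulerArnoldIntegral (l β ν₁ ν₂ ν₃ : ℝ) (x : ℝ × ℝ × ℝ) : ℝ :=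
  (l + β * ν₁) * x.1 ^ 2 + (l + β * ν₂) * x.2.1 ^ 2 - (l + β * ν₃) * x.2.2 ^ 2

theorem locallyLipschitz_eulerArnoldField (ν₁ ν₂ ν₃ : ℝ) :
    LocallyLipschitz (eulerArnoldField ν₁ ν₂ ν₃) :=
  ContDiff.locallyLipschitz (𝕂 := ℝ) (by unfold eulerArnoldField; fun_prop)

theorem isFirstIntegral_eulerArnoldIntegral (l β ν₁ ν₂ ν₃ : ℝ) :
    IsFirstIntegral (eulerArnoldIntegral l β ν₁ ν₂ ν₃) (eulerArnoldField ν₁ ν₂ ν₃) := by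
  refine ⟨by unfold eulerArnoldIntegral; fun_prop, fun x => ?_⟩
  have h₁ := hasFDerivAt_fst (𝕜 := ℝ) (p := x)
  have h₂ := (hasFDerivAt_snd (𝕜 := ℝ) (p := x)).fst
  have h₃ := (hasFDerivAt_snd (𝕜 := ℝ) (p := x)).snd
  have hQ : HasFDerivAt (eulerArnoldIntegral l β ν₁ ν₂ ν₃) _ x :=
    (((h₁.pow 2).const_mul (l + β * ν₁)).add ((h₂.pow 2).const_mul (l + β * ν₂))).sub
      ((h₃.pow 2).const_mul (l + β * ν₃))
  rw [hQ.fderiv]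
  -- the coefficient of `2 x₁ x₂ x₃` is
  -- `(λ + βν₁)(ν₂ - ν₃) + (λ + βν₂)(ν₃ - ν₁) - (λ + βν₃)(ν₂ - ν₁)`, which vanishes identically
  simp [eulerArnoldField]
  ring

theorem exists_add_mul_pos_pos_neg {ν₁ ν₂ ν₃ : ℝ} (h : (ν₂ - ν₃) * (ν₃ - ν₁) < 0) :
    ∃ l β : ℝ, 0 < l + β * ν₁ ∧ 0 < l + β * ν₂ ∧ l + β * ν₃ < 0 := by
  rcases mul_neg_iff.mp h with ⟨h₁, h₂⟩ | ⟨h₁, h₂⟩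
  · rcases le_total ν₁ ν₂ with hl | hl
    · exact ⟨-(ν₃ + ν₁) / 2, 1, by linarith, by linarith, by linarith⟩
    · exact ⟨-(ν₃ + ν₂) / 2, 1, by linarith, by linarith, by linarith⟩
  · rcases le_total ν₁ ν₂ with hl | hl
    · exact ⟨(ν₃ + ν₂) / 2, -1, by linarith, by linarith, by linarith⟩
    · exact ⟨(ν₃ + ν₁) / 2, -1, by linarith, by linarith, by linarith⟩

theorem mul_sq_add_mul_sq_sub_mul_sq_pos {A B C p q r : ℝ} (hA : 0 < A) (hB : 0 < B) (hC : C < 0)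
    (h : ¬(p = 0 ∧ q = 0 ∧ r = 0)) : 0 < A * p ^ 2 + B * q ^ 2 - C * r ^ 2 := by
  have hp := mul_nonneg hA.le (sq_nonneg p)
  have hq := mul_nonneg hB.le (sq_nonneg q)
  have hr := mul_nonneg (neg_nonneg.2 hC.le) (sq_nonneg r)
  by_contra! hle
  have hp0 : A * p ^ 2 = 0 := by linarith
  have hq0 : B * q ^ 2 = 0 := by linarith
  have hr0 : C * r ^ 2 = 0 := by linarith
  exact h ⟨by simpa [hA.ne'] using hp0, by simpa [hB.ne'] using hq0, by simpa [hC.ne] using hr0⟩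

theorem abs_le_of_mul_sq_le {A c y : ℝ} (hA : 0 < A) (h : A * y ^ 2 ≤ c) : |y| ≤ c / A + 1 := by
  have : y ^ 2 ≤ c / A := by rw [le_div_iff₀ hA]; linarith
  nlinarith [sq_abs y, abs_nonneg y]

theorem isBounded_eulerArnoldIntegral_preimage {l β ν₁ ν₂ ν₃ : ℝ} (hA : 0 < l + β * ν₁)
    (hB : 0 < l + β * ν₂) (hC : l + β * ν₃ < 0) (c : ℝ) :
    IsBounded (eulerArnoldIntegral l β ν₁ ν₂ ν₃ ⁻¹' {c}) := by
  refine isBounded_iff_forall_norm_le.2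
    ⟨(c / (l + β * ν₁) + 1) + (c / (l + β * ν₂) + 1) + (c / -(l + β * ν₃) + 1), ?_⟩
  rintro ⟨x₁, x₂, x₃⟩ hx
  simp only [mem_preimage, mem_singleton_iff, eulerArnoldIntegral] at hx
  have h₁ := mul_nonneg hA.le (sq_nonneg x₁)
  have h₂ := mul_nonneg hB.le (sq_nonneg x₂)
  have h₃ := mul_nonneg (neg_nonneg.2 hC.le) (sq_nonneg x₃)
  simp only [Prod.norm_def, Real.norm_eq_abs, max_le_iff]
  have b₁ := abs_le_of_mul_sq_le hA (by linarith : (l + β * ν₁) * x₁ ^ 2 ≤ c)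
  have b₂ := abs_le_of_mul_sq_le hB (by linarith : (l + β * ν₂) * x₂ ^ 2 ≤ c)
  have b₃ := abs_le_of_mul_sq_le (neg_pos.2 hC) (by linarith : -(l + β * ν₃) * x₃ ^ 2 ≤ c)
  refine ⟨?_, ?_, ?_⟩ <;> linarith [abs_nonneg x₁, abs_nonneg x₂, abs_nonneg x₃]

/-- If `(ν₂−ν₃)(ν₃−ν₁) < 0`, there exist `λ, β` with `λ+βν₁ > 0`, `λ+βν₂ > 0`, `λ+βν₃ < 0`;
the resulting quadratic form `Q(z) = (λ+βν₁)z₁² + (λ+βν₂)z₂² − (λ+βν₃)z₃²` is positive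
definite and a first integral of the Euler-Arnold vector field
`E(z) = ((ν₂−ν₃)z₂z₃, (ν₃−ν₁)z₁z₃, (ν₂−ν₁)z₁z₂)`, and every maximal solution of `ż = E(z)`
is defined on all of `ℝ`. -/
theorem eulerArnold_diag_complete_of_neg
    (ν₁ ν₂ ν₃ : ℝ) (h : (ν₂ - ν₃) * (ν₃ - ν₁) < 0) :
    (∃ l β : ℝ, (0 < l + β * ν₁) ∧ (0 < l + β * ν₂) ∧ (l + β * ν₃ < 0) ∧
      (∀ p q r : ℝ, ¬(p = 0 ∧ q = 0 ∧ r = 0) →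
        0 < (l + β * ν₁) * p^2 + (l + β * ν₂) * q^2 - (l + β * ν₃) * r^2) ∧
      (∀ (z₁ z₂ z₃ : ℝ → ℝ),
        (∀ t, HasDerivAt z₁ ((ν₂ - ν₃) * z₂ t * z₃ t) t) →
        (∀ t, HasDerivAt z₂ ((ν₃ - ν₁) * z₁ t * z₃ t) t) →
        (∀ t, HasDerivAt z₃ ((ν₂ - ν₁) * z₁ t * z₂ t) t) →
        ∀ t s : ℝ,
          (l + β * ν₁) * (z₁ t)^2 + (l + β * ν₂) * (z₂ t)^2 - (l + β * ν₃) * (z₃ t)^2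
          = (l + β * ν₁) * (z₁ s)^2 + (l + β * ν₂) * (z₂ s)^2 - (l + β * ν₃) * (z₃ s)^2)) ∧
    (∀ (a b : ℝ) (z₁ z₂ z₃ : ℝ → ℝ),
      (∀ t ∈ Set.Ioo a b, HasDerivAt z₁ ((ν₂ - ν₃) * z₂ t * z₃ t) t) →
      (∀ t ∈ Set.Ioo a b, HasDerivAt z₂ ((ν₃ - ν₁) * z₁ t * z₃ t) t) →
      (∀ t ∈ Set.Ioo a b, HasDerivAt z₃ ((ν₂ - ν₁) * z₁ t * z₂ t) t) →
      ∃ w₁ w₂ w₃ : ℝ → ℝ,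
        (∀ t ∈ Set.Ioo a b, w₁ t = z₁ t ∧ w₂ t = z₂ t ∧ w₃ t = z₃ t) ∧
        (∀ t : ℝ, HasDerivAt w₁ ((ν₂ - ν₃) * w₂ t * w₃ t) t) ∧
        (∀ t : ℝ, HasDerivAt w₂ ((ν₃ - ν₁) * w₁ t * w₃ t) t) ∧
        (∀ t : ℝ, HasDerivAt w₃ ((ν₂ - ν₁) * w₁ t * w₂ t) t)) := by
  obtain ⟨l, β, hA, hB, hC⟩ := exists_add_mul_pos_pos_neg h
  have hQ := isFirstIntegral_eulerArnoldIntegral l β ν₁ ν₂ ν₃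
  have hsol : ∀ {z₁ z₂ z₃ : ℝ → ℝ} {t : ℝ}, HasDerivAt z₁ ((ν₂ - ν₃) * z₂ t * z₃ t) t →
      HasDerivAt z₂ ((ν₃ - ν₁) * z₁ t * z₃ t) t → HasDerivAt z₃ ((ν₂ - ν₁) * z₁ t * z₂ t) t →
      HasDerivAt (fun t => (z₁ t, z₂ t, z₃ t)) (eulerArnoldField ν₁ ν₂ ν₃ (z₁ t, z₂ t, z₃ t)) t :=
    fun h₁ h₂ h₃ => h₁.prodMk (h₂.prodMk h₃)
  refine ⟨⟨l, β, hA, hB, hC, fun p q r => mul_sq_add_mul_sq_sub_mul_sq_pos hA hB hC,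
    fun z₁ z₂ z₃ h₁ h₂ h₃ t s => ?_⟩, fun a b z₁ z₂ z₃ h₁ h₂ h₃ => ?_⟩
  · exact hQ.eq_of_hasDerivAt isOpen_univ isPreconnected_univ
      (fun t _ => hsol (h₁ t) (h₂ t) (h₃ t)) trivial trivial
  · obtain ⟨w, hwz, hw⟩ := hQ.exists_eqOn_forall_hasDerivAt
      (locallyLipschitz_eulerArnoldField ν₁ ν₂ ν₃) (isBounded_eulerArnoldIntegral_preimage hA hB hC)
      (fun t ht => hsol (h₁ t ht) (h₂ t ht) (h₃ t ht))
    exact ⟨fun t => (w t).1, fun t => (w t).2.1, fun t => (w t).2.2,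
      fun t ht => by simp [hwz ht], fun t => (hw t).fst, fun t => (hw t).snd.fst,
      fun t => (hw t).snd.snd⟩
end

section
/- Let a, b > 0 and c = a + b, and let E be the vector field on ℝ³ given by E(z₁,z₂,z₃) = (a z₂ z₃, b z₁ z₃, c z₁ z₂). Then the vector v = (√(a/c), √(b/c), 1) satisfies E(v) = √(ab) · v. Consequently, z(t) = v/(1 − √(ab)·t) is a solution of ż = E(z) with z(0) = v that blows up as t → 1/√(ab), and the vector field E is not complete. -/
/-!
Since `E` is homogeneous quadratic, `E(v) = k v` with `k = √(ab)` makes `v / (1 - k t)` a solution,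
which leaves every compact set as `t → 1 / k`.

No solution through `v` exists for all time: `√b z₁ - √a z₂` and `√c z₁ - √a z₃` satisfy linear
equations and vanish at `t = 0`, so by Grönwall they vanish for `t ≥ 0`. There `z₁` solves the
Riccati equation `z₁' = √b √c z₁²` with `z₁(0) > 0`, and `1 / z₁` then decreases at the constant
rate `√b √c` until it would reach `0`.
-/

open Filter Real Set Topology

theorem mul_sqrt_div_eq {a b : ℝ} (ha : 0 ≤ a) (hb : 0 ≤ b) (c : ℝ) :
    a * √(b / c) = √(a * b) * √(a / c) := by
  rw [← sqrt_mul (mul_nonneg ha hb), show a * b * (a / c) = a ^ 2 * (b / c) by ring,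
    sqrt_mul (sq_nonneg a), sqrt_sq ha]

theorem mul_sqrt_div_mul_sqrt_div_eq {a c : ℝ} (ha : 0 ≤ a) (hc : 0 < c) (b : ℝ) :
    c * √(a / c) * √(b / c) = √(a * b) := by
  rw [mul_assoc, ← sqrt_mul (by positivity), show a / c * (b / c) = a * b / c ^ 2 by ring,
    sqrt_div' _ (sq_nonneg c), sqrt_sq hc.le, mul_div_cancel₀ _ hc.ne']

theorem hasDerivAt_inv_one_sub_mul_mul {k t p q r s : ℝ} (ht : 1 - k * t ≠ 0)
    (hE : p * q * r = k * s) :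
    HasDerivAt (fun u ↦ (1 - k * u)⁻¹ * s)
      (p * ((1 - k * t)⁻¹ * q) * ((1 - k * t)⁻¹ * r)) t := by
  have hlin : HasDerivAt (fun u ↦ 1 - k * u) (-k) t := by
    simpa using ((hasDerivAt_id t).const_mul k).const_sub 1
  refine ((hlin.inv ht).mul_const s).congr_deriv ?_
  field_simp
  linear_combination -hE

theorem one_sub_mul_pos_of_lt_inv {k t : ℝ} (hk : 0 < k) (ht : t < k⁻¹) : 0 < 1 - k * t :=
  sub_pos.2 ((lt_inv_mul_iff₀ hk).1 (by rwa [mul_one]))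

theorem tendsto_inv_one_sub_mul_nhdsLT {k : ℝ} (hk : 0 < k) :
    Tendsto (fun t ↦ (1 - k * t)⁻¹) (𝓝[<] k⁻¹) atTop := by
  refine Tendsto.inv_tendsto_nhdsGT_zero (tendsto_nhdsWithin_of_tendsto_nhds_of_eventually_within
    _ ?_ ?_)
  · have h := (continuous_const.sub (continuous_const.mul continuous_id)).tendsto' k⁻¹ 0
      (by simp [mul_inv_cancel₀ hk.ne'] : 1 - k * id k⁻¹ = 0)
    exact h.mono_left nhdsWithin_le_nhds
  · filter_upwards [self_mem_nhdsWithin] with t ht using one_sub_mul_pos_of_lt_inv hk ht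

theorem eq_zero_of_hasDerivAt_mul_self {f g : ℝ → ℝ} (hf : ∀ t, HasDerivAt f (g t * f t) t)
    (hg : Continuous g) (h₀ : f 0 = 0) : ∀ T ≥ 0, f T = 0 := by
  intro T hT
  obtain ⟨C, hC⟩ := (isCompact_Icc (a := 0) (b := T)).exists_bound_of_continuousOn hg.continuousOn
  have hgronwall := norm_le_gronwallBound_of_norm_deriv_right_le (δ := 0) (K := C) (ε := 0)
    (fun t _ ↦ (hf t).continuousAt.continuousWithinAt) (fun t _ ↦ (hf t).hasDerivWithinAt)
    (by simp [h₀]) (fun t ht ↦ by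
      rw [norm_mul, add_zero]
      exact mul_le_mul_of_nonneg_right (hC t (Ico_subset_Icc_self ht)) (norm_nonneg _))
    T ⟨hT, le_rfl⟩
  rwa [gronwallBound_ε0_δ0, norm_le_zero_iff] at hgronwall

theorem sqrt_mul_eq_sqrt_mul_of_hasDerivAt {p q : ℝ} (hp : 0 ≤ p) (hq : 0 ≤ q) {x y w : ℝ → ℝ}
    (hx : ∀ t, HasDerivAt x (p * y t * w t) t) (hy : ∀ t, HasDerivAt y (q * x t * w t) t)
    (hw : Continuous w) (h₀ : √q * x 0 = √p * y 0) : ∀ T ≥ 0, √q * x T = √p * y T := by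
  intro T hT
  refine sub_eq_zero.1 (eq_zero_of_hasDerivAt_mul_self (f := fun t ↦ √q * x t - √p * y t)
    (g := fun t ↦ -(√p * √q * w t)) (fun t ↦ ?_) (by fun_prop) (sub_eq_zero.2 h₀) T hT)
  refine (((hx t).const_mul √q).sub ((hy t).const_mul √p)).congr_deriv ?_
  linear_combination (√p * w t * x t) * mul_self_sqrt hq - (√q * y t * w t) * mul_self_sqrt hp

theorem not_forall_hasDerivAt_const_mul_sq {K : ℝ} {y : ℝ → ℝ} (hK : 0 < K) (hy₀ : 0 < y 0) :
    ¬ ∀ t ≥ 0, HasDerivAt y (K * y t ^ 2) t := by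
  intro hy
  have hmono : MonotoneOn y (Ici 0) := by
    refine monotoneOn_of_deriv_nonneg (convex_Ici 0)
      (fun t ht ↦ (hy t ht).continuousAt.continuousWithinAt) (fun t ht ↦ ?_) (fun t ht ↦ ?_) <;>
    rw [interior_Ici] at ht
    · exact (hy t ht.le).differentiableAt.differentiableWithinAt
    · rw [(hy t ht.le).deriv]
      positivity
  have hpos : ∀ t ≥ 0, 0 < y t := fun t ht ↦ hy₀.trans_le (hmono (mem_Ici.2 le_rfl) ht ht)
  -- `(1 / y)' = -K`, so `1 / y` would reach `0` at time `T`
  set T := (K * y 0)⁻¹ with hTdef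
  have hconst : ∀ t ∈ Icc 0 T, (y t)⁻¹ + K * t = (y 0)⁻¹ + K * 0 := by
    refine constant_of_has_deriv_right_zero (fun t ht ↦ ?_) (fun t ht ↦ ?_)
    · exact ((hy t ht.1).continuousAt.inv₀ (hpos t ht.1).ne').add (by fun_prop)
        |>.continuousWithinAt
    · have hd := ((hy t ht.1).inv (hpos t ht.1).ne').add ((hasDerivAt_id t).const_mul K)
      refine (hd.congr_deriv ?_).hasDerivWithinAt
      field_simp [(hpos t ht.1).ne']
      ring
  have hT := hconst T ⟨by positivity, le_rfl⟩
  rw [show K * T = (y 0)⁻¹ by rw [hTdef, mul_inv, mul_inv_cancel_left₀ hK.ne'], mul_zero, add_zero,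
    add_eq_right, inv_eq_zero] at hT
  exact (hpos T (by positivity)).ne' hT

/-- For `a, b > 0`, `c = a+b`, the vector `v = (√(a/c), √(b/c), 1)` is an idempotent of
`E(z) = (a z₂z₃, b z₁z₃, c z₁z₂)`: `E(v) = √(ab)·v`. Consequently `z(t) = v/(1−√(ab)t)` is a
solution through `v` blowing up as `t → 1/√(ab)`, and `E` is not complete. -/
theorem eulerArnold_diag_incomplete_of_pos
    (a b c : ℝ) (ha : 0 < a) (hb : 0 < b) (hc : c = a + b) :
    (a * Real.sqrt (b / c) * 1 = Real.sqrt (a * b) * Real.sqrt (a / c) ∧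
     b * Real.sqrt (a / c) * 1 = Real.sqrt (a * b) * Real.sqrt (b / c) ∧
     c * Real.sqrt (a / c) * Real.sqrt (b / c) = Real.sqrt (a * b) * 1) ∧
    ((1 - Real.sqrt (a * b) * 0)⁻¹ • (Real.sqrt (a / c), Real.sqrt (b / c), (1 : ℝ))
        = (Real.sqrt (a / c), Real.sqrt (b / c), (1 : ℝ))) ∧
    (∀ t ∈ Set.Iio (Real.sqrt (a * b))⁻¹,
      HasDerivAt (fun u : ℝ => (1 - Real.sqrt (a * b) * u)⁻¹ * Real.sqrt (a / c))
        (a * ((1 - Real.sqrt (a * b) * t)⁻¹ * Real.sqrt (b / c))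
           * ((1 - Real.sqrt (a * b) * t)⁻¹ * 1)) t ∧
      HasDerivAt (fun u : ℝ => (1 - Real.sqrt (a * b) * u)⁻¹ * Real.sqrt (b / c))
        (b * ((1 - Real.sqrt (a * b) * t)⁻¹ * Real.sqrt (a / c))
           * ((1 - Real.sqrt (a * b) * t)⁻¹ * 1)) t ∧
      HasDerivAt (fun u : ℝ => (1 - Real.sqrt (a * b) * u)⁻¹ * 1)
        (c * ((1 - Real.sqrt (a * b) * t)⁻¹ * Real.sqrt (a / c))
           * ((1 - Real.sqrt (a * b) * t)⁻¹ * Real.sqrt (b / c))) t) ∧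
    Tendsto (fun t : ℝ => (1 - Real.sqrt (a * b) * t)⁻¹)
      (nhdsWithin (Real.sqrt (a * b))⁻¹ (Set.Iio (Real.sqrt (a * b))⁻¹)) atTop ∧
    ¬ ∃ z₁ z₂ z₃ : ℝ → ℝ,
        z₁ 0 = Real.sqrt (a / c) ∧ z₂ 0 = Real.sqrt (b / c) ∧ z₃ 0 = 1 ∧
        (∀ t : ℝ, HasDerivAt z₁ (a * z₂ t * z₃ t) t) ∧
        (∀ t : ℝ, HasDerivAt z₂ (b * z₁ t * z₃ t) t) ∧
        (∀ t : ℝ, HasDerivAt z₃ (c * z₁ t * z₂ t) t) := by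
  have hc₀ : 0 < c := hc ▸ add_pos ha hb
  have hk : 0 < √(a * b) := sqrt_pos.2 (mul_pos ha hb)
  have hv : a * √(b / c) * 1 = √(a * b) * √(a / c) ∧ b * √(a / c) * 1 = √(a * b) * √(b / c) ∧
      c * √(a / c) * √(b / c) = √(a * b) * 1 := by
    refine ⟨?_, ?_, ?_⟩
    · rw [mul_one, mul_sqrt_div_eq ha.le hb.le]
    · rw [mul_one, mul_sqrt_div_eq hb.le ha.le, mul_comm b]
    · rw [mul_one, mul_sqrt_div_mul_sqrt_div_eq ha.le hc₀]
  refine ⟨hv, by simp, fun t ht ↦ ?_, tendsto_inv_one_sub_mul_nhdsLT hk, ?_⟩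
  · have ht' := (one_sub_mul_pos_of_lt_inv hk ht).ne'
    exact ⟨hasDerivAt_inv_one_sub_mul_mul ht' hv.1, hasDerivAt_inv_one_sub_mul_mul ht' hv.2.1,
      hasDerivAt_inv_one_sub_mul_mul ht' hv.2.2⟩
  rintro ⟨z₁, z₂, z₃, h₁₀, h₂₀, h₃₀, h₁, h₂, h₃⟩
  have h₁₂ := sqrt_mul_eq_sqrt_mul_of_hasDerivAt ha.le hb.le h₁ h₂
    (continuous_iff_continuousAt.2 fun t ↦ (h₃ t).continuousAt)
    (by rw [h₁₀, h₂₀, ← sqrt_mul hb.le, ← sqrt_mul ha.le, mul_div_left_comm])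
  have h₁₃ := sqrt_mul_eq_sqrt_mul_of_hasDerivAt ha.le hc₀.le
    (fun t ↦ by simpa only [mul_right_comm] using h₁ t) h₃
    (continuous_iff_continuousAt.2 fun t ↦ (h₂ t).continuousAt)
    (by rw [h₁₀, h₃₀, ← sqrt_mul hc₀.le, mul_div_cancel₀ _ hc₀.ne', mul_one])
  refine not_forall_hasDerivAt_const_mul_sq (K := √b * √c) (by positivity)
    (h₁₀ ▸ sqrt_pos.2 (div_pos ha hc₀)) fun t ht ↦ (h₁ t).congr_deriv ?_
  linear_combination -(z₂ t * z₃ t) * mul_self_sqrt ha.le - (√a * z₃ t) * h₁₂ t ht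
    - (√b * z₁ t) * h₁₃ t ht
end

section
/- Let a, b be real constants and E the vector field on ℝ³ given by E(z₁,z₂,z₃) = (b z₃², −z₁(a z₂ + b z₃), a z₁ z₃). Then the function I(z) = −a z₁² + b z₃² is a first integral of E: it is constant along every differentiable solution of ż = E(z). If moreover ab < 0, then I restricted to the (z₁,z₃) variables is (up to sign) positive definite, so (z₁(t), z₃(t)) remains bounded along every solution. -/
/-!
Along a solution, `d/dt (z₁²) = 2b z₁ z₃²` and `d/dt (z₃²) = 2a z₁ z₃²`, so the derivative of
`−a z₁² + b z₃²` cancels, and on an open preconnected set a function with zero derivative is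
constant. When `ab < 0` the form `−a p² + b q²` equals `±(|a| p² + |b| q²)`, so it is
definite, and `|a| z₁² + |b| z₃²` stays equal to its initial value, which bounds `z₁` and `z₃`.
-/

theorem hasDerivAt_neg_mul_sq_add_mul_sq {a b t : ℝ} {z₁ z₃ : ℝ → ℝ}
    (h₁ : HasDerivAt z₁ (b * z₃ t ^ 2) t) (h₃ : HasDerivAt z₃ (a * z₁ t * z₃ t) t) :
    HasDerivAt (fun t => -a * z₁ t ^ 2 + b * z₃ t ^ 2) 0 t := by
  refine (((h₁.fun_pow 2).const_mul (-a)).add ((h₃.fun_pow 2).const_mul b)).congr_deriv ?_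
  norm_num
  ring

theorem mul_sq_add_mul_sq_pos {α β p q : ℝ} (hα : 0 < α) (hβ : 0 < β)
    (hpq : ¬(p = 0 ∧ q = 0)) : 0 < α * p ^ 2 + β * q ^ 2 := by
  rcases not_and_or.1 hpq with hp | hq <;> positivity

theorem abs_mul_sq_add_abs_mul_sq_of_mul_neg {a b : ℝ} (hab : a * b < 0) (p q : ℝ) :
    |a| * p ^ 2 + |b| * q ^ 2 = |-a * p ^ 2 + b * q ^ 2| := by
  rcases mul_neg_iff.1 hab with ⟨ha, hb⟩ | ⟨ha, hb⟩
  · rw [abs_of_pos ha, abs_of_neg hb, abs_of_nonpos (by nlinarith [sq_nonneg p, sq_nonneg q])]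
    ring
  · rw [abs_of_neg ha, abs_of_pos hb, abs_of_nonneg (by nlinarith [sq_nonneg p, sq_nonneg q])]

theorem abs_le_sqrt_of_mul_sq_add_mul_sq_le {α β p q c : ℝ} (hα : 0 < α) (hβ : 0 < β)
    (h : α * p ^ 2 + β * q ^ 2 ≤ c) : |p| ≤ √(c / α) ∧ |q| ≤ √(c / β) := by
  refine ⟨Real.abs_le_sqrt ?_, Real.abs_le_sqrt ?_⟩
  · rw [le_div_iff₀' hα]
    nlinarith [sq_nonneg q]
  · rw [le_div_iff₀' hβ]
    nlinarith [sq_nonneg p]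

theorem exists_abs_le_of_mul_sq_add_mul_sq_eq {α β : ℝ} (hα : 0 < α) (hβ : 0 < β)
    {s : Set ℝ} {p q : ℝ → ℝ}
    (h : ∀ t ∈ s, ∀ r ∈ s, α * p t ^ 2 + β * q t ^ 2 = α * p r ^ 2 + β * q r ^ 2) :
    ∃ C : ℝ, ∀ t ∈ s, |p t| ≤ C ∧ |q t| ≤ C := by
  rcases s.eq_empty_or_nonempty with rfl | ⟨t₀, ht₀⟩
  · exact ⟨0, by simp⟩
  set c := α * p t₀ ^ 2 + β * q t₀ ^ 2
  refine ⟨√(c / α) + √(c / β), fun t ht => ?_⟩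
  obtain ⟨hp, hq⟩ := abs_le_sqrt_of_mul_sq_add_mul_sq_le hα hβ (h t ht t₀ ht₀).le
  exact ⟨hp.trans (le_add_of_nonneg_right (Real.sqrt_nonneg _)),
    hq.trans (le_add_of_nonneg_left (Real.sqrt_nonneg _))⟩

theorem eulerArnold_case3_first_integral_general
    (a b : ℝ)
    (s : Set ℝ) (hs : IsOpen s) (hconn : IsPreconnected s)
    (z₁ z₃ : ℝ → ℝ)
    (h₁ : ∀ t ∈ s, HasDerivAt z₁ (b * (z₃ t)^2) t)
    (h₃ : ∀ t ∈ s, HasDerivAt z₃ (a * z₁ t * z₃ t) t) :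
    (∀ t ∈ s, ∀ r ∈ s, -a * (z₁ t)^2 + b * (z₃ t)^2 = -a * (z₁ r)^2 + b * (z₃ r)^2) ∧
    (a * b < 0 →
      ((∀ p q : ℝ, ¬(p = 0 ∧ q = 0) → 0 < -a * p^2 + b * q^2) ∨
       (∀ p q : ℝ, ¬(p = 0 ∧ q = 0) → -a * p^2 + b * q^2 < 0)) ∧
      ∃ C : ℝ, ∀ t ∈ s, |z₁ t| ≤ C ∧ |z₃ t| ≤ C) := by
  have hderiv (t : ℝ) (ht : t ∈ s) := hasDerivAt_neg_mul_sq_add_mul_sq (h₁ t ht) (h₃ t ht)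
  have hconst : ∀ t ∈ s, ∀ r ∈ s, -a * z₁ t ^ 2 + b * z₃ t ^ 2 = -a * z₁ r ^ 2 + b * z₃ r ^ 2 :=
    fun t ht r hr => hs.is_const_of_deriv_eq_zero hconn
      (fun x hx => (hderiv x hx).differentiableAt.differentiableWithinAt)
      (fun x hx => (hderiv x hx).deriv) ht hr
  refine ⟨hconst, fun hab => ⟨?_, ?_⟩⟩
  · rcases mul_neg_iff.1 hab with ⟨ha, hb⟩ | ⟨ha, hb⟩
    · refine Or.inr fun p q hpq => ?_
      linarith [mul_sq_add_mul_sq_pos ha (neg_pos.2 hb) hpq]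
    · refine Or.inl fun p q hpq => ?_
      linarith [mul_sq_add_mul_sq_pos (neg_pos.2 ha) hb hpq]
  · have habs := abs_mul_sq_add_abs_mul_sq_of_mul_neg hab
    refine exists_abs_le_of_mul_sq_add_mul_sq_eq (abs_pos.2 (left_ne_zero_of_mul hab.ne))
      (abs_pos.2 (right_ne_zero_of_mul hab.ne)) fun t ht r hr => ?_
    rw [habs, habs, hconst t ht r hr]

/-- For `E(z) = (b z₃², −z₁(a z₂ + b z₃), a z₁ z₃)`, the function `I(z) = −a z₁² + b z₃²` is a
first integral; and if `ab < 0` then `I` is, up to sign, positive definite in `(z₁, z₃)`, so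
`(z₁(t), z₃(t))` remains bounded along every solution. -/
theorem eulerArnold_case3_first_integral
    (a b : ℝ)
    (s : Set ℝ) (hs : IsOpen s) (hconn : IsPreconnected s)
    (z₁ z₂ z₃ : ℝ → ℝ)
    (h₁ : ∀ t ∈ s, HasDerivAt z₁ (b * (z₃ t)^2) t)
    (h₂ : ∀ t ∈ s, HasDerivAt z₂ (-(z₁ t * (a * z₂ t + b * z₃ t))) t)
    (h₃ : ∀ t ∈ s, HasDerivAt z₃ (a * z₁ t * z₃ t) t) :
    (∀ t ∈ s, ∀ r ∈ s, -a * (z₁ t)^2 + b * (z₃ t)^2 = -a * (z₁ r)^2 + b * (z₃ r)^2) ∧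
    (a * b < 0 →
      ((∀ p q : ℝ, ¬(p = 0 ∧ q = 0) → 0 < -a * p^2 + b * q^2) ∨
       (∀ p q : ℝ, ¬(p = 0 ∧ q = 0) → -a * p^2 + b * q^2 < 0)) ∧
      ∃ C : ℝ, ∀ t ∈ s, |z₁ t| ≤ C ∧ |z₃ t| ≤ C) :=
  eulerArnold_case3_first_integral_general a b s hs hconn z₁ z₃ h₁ h₃
end

section
/- Let a, b > 0 and let E be the vector field on ℝ³ given by E(z₁,z₂,z₃) = (b z₃², −z₁(a z₂ + b z₃), a z₁ z₃). Then the vector v = (√(b/a), −b/(2a), 1) satisfies E(v) = √(ab) · v, and therefore z(t) = v/(1 − √(ab) t), defined for t < 1/√(ab), is a solution of ż = E(z) through v that cannot be extended to all of ℝ; hence E is not complete. -/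
/-!
The curve `v / (1 - √(ab) t)` solves `ż = E(z)` because `E` is homogeneous quadratic and
`E(v) = √(ab) v`. It cannot be continued: `a z₁² - b z₃²` is a first integral vanishing at `v`,
so along any solution through `v` the first coordinate obeys the Riccati equation `ż₁ = a z₁²`
with `z₁(0) > 0`, whence `1 / z₁(t) = 1 / z₁(0) - a t` reaches `0` in finite time.
-/

open Real

lemma sqrt_mul_mul_sqrt_div {a b : ℝ} (ha : 0 < a) (hb : 0 ≤ b) : √(a * b) * √(b / a) = b := by
  rw [← sqrt_mul (by positivity), show a * b * (b / a) = b ^ 2 by field_simp, sqrt_sq hb]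

lemma mul_sqrt_div {a b : ℝ} (ha : 0 < a) : a * √(b / a) = √(a * b) := by
  rw [show a * b = a ^ 2 * (b / a) by field_simp, sqrt_mul (sq_nonneg a), sqrt_sq ha.le]

lemma hasDerivAt_inv_one_sub_mul {c t : ℝ} (h : c * t ≠ 1) :
    HasDerivAt (fun u => (1 - c * u)⁻¹) (c * (1 - c * t)⁻¹ ^ 2) t := by
  have hlin : HasDerivAt (fun u => 1 - c * u) (-c) t := by
    simpa using ((hasDerivAt_id t).const_mul c).const_sub 1
  refine (hlin.inv (sub_ne_zero.2 h.symm)).congr_deriv ?_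
  rw [inv_pow, neg_neg, div_eq_mul_inv]

lemma mul_sq_sub_mul_sq_eq_of_hasDerivAt {a b : ℝ} {x z : ℝ → ℝ}
    (hx : ∀ t, HasDerivAt x (b * z t ^ 2) t) (hz : ∀ t, HasDerivAt z (a * x t * z t) t) (t : ℝ) :
    a * x t ^ 2 - b * z t ^ 2 = a * x 0 ^ 2 - b * z 0 ^ 2 := by
  have hQ : ∀ s, HasDerivAt (fun u => a * x u ^ 2 - b * z u ^ 2) 0 s := fun s => by
    refine ((((hx s).pow 2).const_mul a).sub (((hz s).pow 2).const_mul b)).congr_deriv ?_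
    ring
  exact is_const_of_deriv_eq_zero (fun s => (hQ s).differentiableAt) (fun s => (hQ s).deriv) t 0

lemma inv_eq_of_hasDerivAt_mul_sq {a : ℝ} {f : ℝ → ℝ} (ha : 0 ≤ a) (h0 : 0 < f 0)
    (hf : ∀ t, HasDerivAt f (a * f t ^ 2) t) {t : ℝ} (ht : 0 ≤ t) :
    (f t)⁻¹ = (f 0)⁻¹ - a * t := by
  have hpos : ∀ s, 0 ≤ s → 0 < f s := fun s hs =>
    h0.trans_le (monotone_of_hasDerivAt_nonneg hf (fun _ => by positivity) hs)
  have hg : ∀ s, 0 ≤ s → HasDerivAt (fun u => (f u)⁻¹ + a * u) 0 s := fun s hs => by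
    refine (((hf s).inv (hpos s hs).ne').add ((hasDerivAt_id s).const_mul a)).congr_deriv ?_
    field_simp [(hpos s hs).ne']
    ring
  have := constant_of_has_deriv_right_zero (a := 0) (b := t)
    (fun s hs => (hg s hs.1).continuousAt.continuousWithinAt)
    (fun s hs => (hg s hs.1).hasDerivWithinAt) t ⟨ht, le_rfl⟩
  simp only [mul_zero, add_zero] at this
  linarith

lemma not_forall_hasDerivAt_mul_sq {a : ℝ} {f : ℝ → ℝ} (ha : 0 < a) (h0 : 0 < f 0) :
    ¬ ∀ t, HasDerivAt f (a * f t ^ 2) t := by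
  intro hf
  have hblow := inv_eq_of_hasDerivAt_mul_sq ha.le h0 hf (t := (f 0)⁻¹ / a) (by positivity)
  rw [mul_div_cancel₀ _ ha.ne', sub_self, inv_eq_zero] at hblow
  have hmono : f 0 ≤ f ((f 0)⁻¹ / a) :=
    monotone_of_hasDerivAt_nonneg hf (fun _ => by positivity) (by positivity)
  linarith

lemma not_forall_hasDerivAt_of_mul_sq_eq {a b : ℝ} {x z : ℝ → ℝ} (ha : 0 < a) (hx0 : 0 < x 0)
    (h0 : a * x 0 ^ 2 = b * z 0 ^ 2) (hx : ∀ t, HasDerivAt x (b * z t ^ 2) t) :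
    ¬ ∀ t, HasDerivAt z (a * x t * z t) t := fun hz =>
  not_forall_hasDerivAt_mul_sq ha hx0 fun t => (hx t).congr_deriv <| by
    linarith [mul_sq_sub_mul_sq_eq_of_hasDerivAt hx hz t]

/-- For `a, b > 0`, the vector `v = (√(b/a), −b/(2a), 1)` satisfies `E(v) = √(ab)·v` for
`E(z) = (b z₃², −z₁(a z₂ + b z₃), a z₁ z₃)`; hence `z(t) = v/(1−√(ab)t)` solves `ż = E(z)` on
`t < 1/√(ab)` with `z(0) = v` and cannot be extended to all of `ℝ`: `E` is not complete. -/
theorem eulerArnold_case3_incomplete_of_pos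
    (a b : ℝ) (ha : 0 < a) (hb : 0 < b) :
    (b * (1 : ℝ)^2 = Real.sqrt (a * b) * Real.sqrt (b / a) ∧
     -(Real.sqrt (b / a) * (a * (-b / (2 * a)) + b * 1)) = Real.sqrt (a * b) * (-b / (2 * a)) ∧
     a * Real.sqrt (b / a) * 1 = Real.sqrt (a * b) * 1) ∧
    ((1 - Real.sqrt (a * b) * 0)⁻¹ = (1 : ℝ)) ∧
    (∀ t ∈ Set.Iio (Real.sqrt (a * b))⁻¹,
      HasDerivAt (fun u : ℝ => (1 - Real.sqrt (a * b) * u)⁻¹ * Real.sqrt (b / a))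
        (b * ((1 - Real.sqrt (a * b) * t)⁻¹ * 1)^2) t ∧
      HasDerivAt (fun u : ℝ => (1 - Real.sqrt (a * b) * u)⁻¹ * (-b / (2 * a)))
        (-(((1 - Real.sqrt (a * b) * t)⁻¹ * Real.sqrt (b / a)) *
            (a * ((1 - Real.sqrt (a * b) * t)⁻¹ * (-b / (2 * a)))
              + b * ((1 - Real.sqrt (a * b) * t)⁻¹ * 1)))) t ∧
      HasDerivAt (fun u : ℝ => (1 - Real.sqrt (a * b) * u)⁻¹ * 1)
        (a * ((1 - Real.sqrt (a * b) * t)⁻¹ * Real.sqrt (b / a))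
           * ((1 - Real.sqrt (a * b) * t)⁻¹ * 1)) t) ∧
    ¬ ∃ z₁ z₂ z₃ : ℝ → ℝ,
        z₁ 0 = Real.sqrt (b / a) ∧ z₂ 0 = -b / (2 * a) ∧ z₃ 0 = 1 ∧
        (∀ t : ℝ, HasDerivAt z₁ (b * (z₃ t)^2) t) ∧
        (∀ t : ℝ, HasDerivAt z₂ (-(z₁ t * (a * z₂ t + b * z₃ t))) t) ∧
        (∀ t : ℝ, HasDerivAt z₃ (a * z₁ t * z₃ t) t) := by
  set c := √(a * b)
  set k := √(b / a)
  have hc : 0 < c := sqrt_pos.2 (by positivity)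
  have hck : c * k = b := sqrt_mul_mul_sqrt_div ha hb.le
  have hak : a * k = c := mul_sqrt_div ha
  have hE₂ : -(k * (a * (-b / (2 * a)) + b * 1)) = c * (-b / (2 * a)) := by
    rw [← hak]; field_simp; ring
  refine ⟨⟨by linarith, hE₂, by rw [hak]⟩, by simp, fun t ht => ?_, ?_⟩
  · have hct : c * t < 1 := (lt_inv_mul_iff₀ hc).1 (by rwa [mul_one])
    have hs := hasDerivAt_inv_one_sub_mul hct.ne
    set s := (1 - c * t)⁻¹
    refine ⟨(hs.mul_const k).congr_deriv ?_, (hs.mul_const _).congr_deriv ?_,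
      (hs.mul_const 1).congr_deriv ?_⟩
    · linear_combination s ^ 2 * hck
    · linear_combination -s ^ 2 * hE₂
    · linear_combination -s ^ 2 * hak
  · rintro ⟨z₁, -, z₃, h₁, -, h₃, hd₁, -, hd₃⟩
    refine not_forall_hasDerivAt_of_mul_sq_eq ha (h₁ ▸ sqrt_pos.2 (div_pos hb ha)) ?_ hd₁ hd₃
    rw [h₁, h₃, sq_sqrt (div_pos hb ha).le]
    field_simp
end

section
/- Let ζ, ν be real numbers with ζν ≠ 0, and let E be the vector field on ℝ³ given by E(z₁,z₂,z₃) = ζν²·( z₃(z₁ − ζν z₃), z₂z₃ − z₁² + ζν z₁z₃, −z₃² ). Then the vector v = (ζν/2, −ζ²ν²/8, 1) satisfies E(v) = −ζν² · v. Consequently z(t) = v/(1 + ζν² t) is a solution of ż = E(z) defined on a maximal interval strictly contained in ℝ, and E is not complete. -/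
/-!
The third component of `E` decouples: `ż₃ = -c z₃²` with `c = ζν²`, a Riccati equation whose
solution through `z₀` is `z₀ / (1 + c z₀ t)`, which blows up at `t = -1 / (c z₀)`. To see that no
global solution can exist, note that `w t = (1 + c z₀ t) z₃ t - z₀` solves the linear equation
`ẇ = -c z₃ w` with `w 0 = 0`, hence vanishes identically by uniqueness for linear equations; but
`w (-1 / (c z₀)) = -z₀`.
-/

open Set

theorem eq_zero_of_hasDerivAt_smul_self {E : Type*} [NormedAddCommGroup E] [NormedSpace ℝ E]
    {a : ℝ → ℝ} {w : ℝ → E} {t₀ : ℝ} (ha : Continuous a)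
    (hw : ∀ t, HasDerivAt w (a t • w t) t) (hw₀ : w t₀ = 0) : w = 0 := by
  funext t
  rw [Pi.zero_apply]
  obtain ⟨A, B, ht, ht₀⟩ : ∃ A B, t ∈ Ioo A B ∧ t₀ ∈ Ioo A B :=
    ⟨min t t₀ - 1, max t t₀ + 1, by constructor <;> constructor <;> grind⟩
  obtain ⟨K, hK⟩ := isCompact_Icc.exists_bound_of_continuousOn (s := Icc A B) ha.continuousOn
  have hLip : ∀ s ∈ Ioo A B, LipschitzOnWith K.toNNReal (a s • · : E → E) univ := fun s hs => by
    refine ((lipschitzWith_smul (a s)).weaken ?_).lipschitzOnWith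
    rw [← NNReal.coe_le_coe, Real.coe_toNNReal', coe_nnnorm]
    exact (hK s (Ioo_subset_Icc_self hs)).trans (le_max_left K 0)
  exact ODE_solution_unique_of_mem_Ioo hLip ht₀ (fun s _ => ⟨hw s, mem_univ _⟩)
    (g := fun _ => 0)
    (fun s _ => ⟨by simpa using hasDerivAt_const s (0 : E), mem_univ _⟩) hw₀ ht

theorem mul_eq_zero_of_forall_hasDerivAt_neg_sq {c : ℝ} {z : ℝ → ℝ}
    (hz : ∀ t, HasDerivAt z (c * -z t ^ 2) t) : c * z 0 = 0 := by
  by_contra hcz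
  set w : ℝ → ℝ := fun t => (1 + c * z 0 * t) * z t - z 0
  have hw : ∀ t, HasDerivAt w ((-c * z t) • w t) t := fun t => by
    have hline : HasDerivAt (fun u => 1 + c * z 0 * u) (c * z 0) t := by
      simpa using ((hasDerivAt_id t).const_mul (c * z 0)).const_add 1
    exact ((hline.mul (hz t)).sub_const (z 0)).congr_deriv (by simp only [w, smul_eq_mul]; ring)
  have hz_cont : Continuous z := continuous_iff_continuousAt.2 fun t => (hz t).continuousAt
  have hw_zero := eq_zero_of_hasDerivAt_smul_self (t₀ := 0) (continuous_const.mul hz_cont) hw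
    (by simp [w])
  have hblowup : 1 + c * z 0 * (-(c * z 0)⁻¹) = 0 := by
    rw [mul_neg, mul_inv_cancel₀ hcz, add_neg_cancel]
  have hz₀ : z 0 = 0 := by
    simpa only [w, hblowup, zero_mul, zero_sub, Pi.zero_apply, neg_eq_zero]
      using congrFun hw_zero (-(c * z 0)⁻¹)
  exact hcz (by rw [hz₀, mul_zero])

theorem hasDerivAt_inv_one_add_mul (c : ℝ) {t : ℝ} (ht : 1 + c * t ≠ 0) :
    HasDerivAt (fun u => (1 + c * u)⁻¹) (-c * (1 + c * t)⁻¹ ^ 2) t := by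
  have hline : HasDerivAt (fun u => 1 + c * u) c t := by
    simpa using ((hasDerivAt_id t).const_mul c).const_add 1
  exact (hline.inv ht).congr_deriv (by field_simp)

/-- For `ζν ≠ 0` and `E(z) = ζν²(z₃(z₁−ζνz₃), z₂z₃−z₁²+ζνz₁z₃, −z₃²)`, the vector
`v = (ζν/2, −ζ²ν²/8, 1)` satisfies `E(v) = −ζν²·v`; hence `z(t) = v/(1+ζν²t)` is a solution
defined on a maximal interval strictly contained in `ℝ`, and `E` is not complete. -/
theorem eulerArnold_case4_incomplete
    (ζ ν : ℝ) (hζν : ζ * ν ≠ 0) :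
    (ζ * ν^2 * (1 * (ζ * ν / 2 - ζ * ν * 1)) = -(ζ * ν^2) * (ζ * ν / 2) ∧
     ζ * ν^2 * ((-(ζ^2 * ν^2) / 8) * 1 - (ζ * ν / 2)^2 + ζ * ν * (ζ * ν / 2) * 1)
       = -(ζ * ν^2) * (-(ζ^2 * ν^2) / 8) ∧
     ζ * ν^2 * (-(1 : ℝ)^2) = -(ζ * ν^2) * 1) ∧
    ((1 + ζ * ν^2 * 0)⁻¹ = (1 : ℝ)) ∧
    (∀ t : ℝ, 0 < 1 + ζ * ν^2 * t →
      HasDerivAt (fun u : ℝ => (1 + ζ * ν^2 * u)⁻¹ * (ζ * ν / 2))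
        (ζ * ν^2 * (((1 + ζ * ν^2 * t)⁻¹ * 1) *
          ((1 + ζ * ν^2 * t)⁻¹ * (ζ * ν / 2) - ζ * ν * ((1 + ζ * ν^2 * t)⁻¹ * 1)))) t ∧
      HasDerivAt (fun u : ℝ => (1 + ζ * ν^2 * u)⁻¹ * (-(ζ^2 * ν^2) / 8))
        (ζ * ν^2 * (((1 + ζ * ν^2 * t)⁻¹ * (-(ζ^2 * ν^2) / 8)) * ((1 + ζ * ν^2 * t)⁻¹ * 1)
          - ((1 + ζ * ν^2 * t)⁻¹ * (ζ * ν / 2))^2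
          + ζ * ν * ((1 + ζ * ν^2 * t)⁻¹ * (ζ * ν / 2)) * ((1 + ζ * ν^2 * t)⁻¹ * 1))) t ∧
      HasDerivAt (fun u : ℝ => (1 + ζ * ν^2 * u)⁻¹ * 1)
        (ζ * ν^2 * (-((1 + ζ * ν^2 * t)⁻¹ * 1)^2)) t) ∧
    ¬ ∃ z₁ z₂ z₃ : ℝ → ℝ,
        z₁ 0 = ζ * ν / 2 ∧ z₂ 0 = -(ζ^2 * ν^2) / 8 ∧ z₃ 0 = 1 ∧
        (∀ t : ℝ, HasDerivAt z₁ (ζ * ν^2 * (z₃ t * (z₁ t - ζ * ν * z₃ t))) t) ∧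
        (∀ t : ℝ, HasDerivAt z₂
          (ζ * ν^2 * (z₂ t * z₃ t - (z₁ t)^2 + ζ * ν * z₁ t * z₃ t)) t) ∧
        (∀ t : ℝ, HasDerivAt z₃ (ζ * ν^2 * (-(z₃ t)^2)) t) := by
  have hc : ζ * ν ^ 2 ≠ 0 := by
    rw [sq, ← mul_assoc]
    exact mul_ne_zero hζν (right_ne_zero_of_mul hζν)
  refine ⟨⟨by ring, by ring, by ring⟩, by simp, fun t ht => ?_, ?_⟩
  -- `E` is homogeneous quadratic, so `E (s • v) = s ^ 2 • E v = -ζν² s ^ 2 • v = d(s • v)/dt`.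
  · have hs := hasDerivAt_inv_one_add_mul (ζ * ν ^ 2) ht.ne'
    exact ⟨(hs.mul_const _).congr_deriv (by ring), (hs.mul_const _).congr_deriv (by ring),
      (hs.mul_const _).congr_deriv (by ring)⟩
  · rintro ⟨-, -, z₃, -, -, hz₃, -, -, hz₃'⟩
    have := mul_eq_zero_of_forall_hasDerivAt_neg_sq hz₃'
    rw [hz₃, mul_one] at this
    exact hc this
end

section
/- Let a, b ∈ ℝ with b ≠ 0 and let E be the vector field on ℝ³ given by E(z₁,z₂,z₃) = ( b(z₂² + z₃²), z₁(a z₃ − b z₂), z₁(a z₂ + b z₃) ). Then there exists a nonzero vector v ∈ ℝ³ and a real λ ≠ 0 with E(v) = λ v; consequently the system ż = E(z) admits a solution defined on a maximal interval strictly contained in ℝ, and E is not complete. -/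
/-!
The eigenvector is `v = (v₁, a, b + c)` with `c² = a² + b²`, `bc > 0`, `v₁² = 2b(b + c)` and
`λ = c v₁`: the last two components of `E(v) = λv` say that `(a, b + c)` is an eigenvector of
`[[-b, a], [a, b]]` for the eigenvalue `λ / v₁ = c`, and the first one then fixes `v₁²`.

`z₁² + z₂² - z₃²` is a first integral, so a solution starting at `(b, 0, b)` keeps
`z₁² = z₃² - z₂² ≤ z₂² + z₃²`; hence `y = b z₁` satisfies `y' ≥ y²` with `y(0) = b² > 0` and
blows up before time `1 / b²`.
-/

open Set

theorem false_of_sq_le_deriv {y y' : ℝ → ℝ} (hy : ∀ t, 0 ≤ t → HasDerivAt y (y' t) t)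
    (hle : ∀ t, 0 ≤ t → y t ^ 2 ≤ y' t) (h0 : 0 < y 0) : False := by
  have hcont : ContinuousOn y (Ici 0) := fun t ht => (hy t ht).continuousAt.continuousWithinAt
  have hmono : MonotoneOn y (Ici 0) := by
    refine monotoneOn_of_hasDerivWithinAt_nonneg (convex_Ici 0) hcont
      (fun t ht => (hy t (interior_subset ht)).hasDerivWithinAt) fun t ht => ?_
    exact (sq_nonneg _).trans (hle t (interior_subset ht))
  have hpos : ∀ t, 0 ≤ t → 0 < y t := fun t ht => h0.trans_le (hmono self_mem_Ici ht ht)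
  -- `(1 / y)' ≤ -1`, so `t + 1 / y t` is antitone; at `T = 1 / y 0` this forces `1 / y T ≤ 0`.
  have hanti : AntitoneOn (fun t => t + (y t)⁻¹) (Ici 0) := by
    refine antitoneOn_of_hasDerivWithinAt_nonpos (convex_Ici 0)
      (continuousOn_id.add (hcont.inv₀ fun t ht => (hpos t ht).ne'))
      (fun t ht => (((hasDerivAt_id t).add
        ((hy t (interior_subset ht)).inv (hpos t (interior_subset ht)).ne')).hasDerivWithinAt))
      fun t ht => ?_
    have hyt := hpos t (interior_subset ht)
    rw [neg_div, ← sub_eq_add_neg, sub_nonpos, le_div_iff₀ (by positivity), one_mul]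
    exact hle t (interior_subset ht)
  have hT : 0 ≤ (y 0)⁻¹ := inv_nonneg.mpr h0.le
  have := hanti self_mem_Ici hT hT
  simp only [zero_add, add_le_iff_nonpos_right, inv_nonpos] at this
  exact (hpos _ hT).not_ge this

theorem eulerArnold_eigenvector_of_sq_eq {a b c v₁ : ℝ} (hc : c ^ 2 = a ^ 2 + b ^ 2)
    (hv₁ : v₁ ^ 2 = 2 * b * (b + c)) :
    b * (a ^ 2 + (b + c) ^ 2) = c * v₁ * v₁ ∧
      v₁ * (a * (b + c) - b * a) = c * v₁ * a ∧
      v₁ * (a * a + b * (b + c)) = c * v₁ * (b + c) :=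
  ⟨by linear_combination (-c) * hv₁ - b * hc, by ring, by linear_combination (-v₁) * hc⟩

theorem exists_sq_eq_and_mul_pos (a : ℝ) {b : ℝ} (hb : b ≠ 0) :
    ∃ c : ℝ, c ^ 2 = a ^ 2 + b ^ 2 ∧ 0 < b * c := by
  have hsq : √(a ^ 2 + b ^ 2) ^ 2 = a ^ 2 + b ^ 2 := Real.sq_sqrt (by positivity)
  have hpos : 0 < √(a ^ 2 + b ^ 2) := Real.sqrt_pos.mpr (by positivity)
  rcases hb.lt_or_gt with hneg | hpos'
  · exact ⟨-√(a ^ 2 + b ^ 2), by rw [neg_sq, hsq], by nlinarith⟩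
  · exact ⟨√(a ^ 2 + b ^ 2), hsq, by positivity⟩

theorem exists_eulerArnold_eigenvector (a : ℝ) {b : ℝ} (hb : b ≠ 0) :
    ∃ v₁ v₂ v₃ lam : ℝ, v₁ ≠ 0 ∧ lam ≠ 0 ∧
      b * (v₂ ^ 2 + v₃ ^ 2) = lam * v₁ ∧
      v₁ * (a * v₃ - b * v₂) = lam * v₂ ∧
      v₁ * (a * v₂ + b * v₃) = lam * v₃ := by
  obtain ⟨c, hc, hbc⟩ := exists_sq_eq_and_mul_pos a hb
  have hbbc : 0 < 2 * b * (b + c) := by nlinarith [sq_pos_of_ne_zero hb]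
  have hv₁ : 0 < √(2 * b * (b + c)) := Real.sqrt_pos.mpr hbbc
  have hc₀ : c ≠ 0 := by rintro rfl; simp at hbc
  exact ⟨_, a, b + c, _, hv₁.ne', mul_ne_zero hc₀ hv₁.ne',
    eulerArnold_eigenvector_of_sq_eq hc (Real.sq_sqrt hbbc.le)⟩

section Solution

variable {a b : ℝ} {z₁ z₂ z₃ : ℝ → ℝ}
  (hz₁ : ∀ t, HasDerivAt z₁ (b * (z₂ t ^ 2 + z₃ t ^ 2)) t)
  (hz₂ : ∀ t, HasDerivAt z₂ (z₁ t * (a * z₃ t - b * z₂ t)) t)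
  (hz₃ : ∀ t, HasDerivAt z₃ (z₁ t * (a * z₂ t + b * z₃ t)) t)
include hz₁ hz₂ hz₃

theorem eulerArnold_first_integral_eq (t : ℝ) :
    z₁ t ^ 2 + z₂ t ^ 2 - z₃ t ^ 2 = z₁ 0 ^ 2 + z₂ 0 ^ 2 - z₃ 0 ^ 2 := by
  have hderiv : ∀ s, HasDerivAt (z₁ ^ 2 + z₂ ^ 2 - z₃ ^ 2) 0 s := fun s =>
    ((((hz₁ s).pow 2).add ((hz₂ s).pow 2)).sub ((hz₃ s).pow 2)).congr_deriv (by push_cast; ring)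
  exact is_const_of_deriv_eq_zero (fun s => (hderiv s).differentiableAt)
    (fun s => (hderiv s).deriv) t 0

theorem false_of_first_integral_nonpos (h₀ : z₁ 0 ^ 2 + z₂ 0 ^ 2 - z₃ 0 ^ 2 ≤ 0)
    (hb : 0 < b * z₁ 0) : False := by
  refine false_of_sq_le_deriv (y := fun t => b * z₁ t) (fun t _ => (hz₁ t).const_mul b)
    (fun t _ => ?_) hb
  have hz : 0 ≤ z₂ t ^ 2 + z₃ t ^ 2 - z₁ t ^ 2 := by
    nlinarith [eulerArnold_first_integral_eq hz₁ hz₂ hz₃ t, sq_nonneg (z₂ t)]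
  nlinarith [mul_nonneg (sq_nonneg b) hz]

end Solution

/-- For `b ≠ 0` and `E(z) = (b(z₂²+z₃²), z₁(az₃−bz₂), z₁(az₂+bz₃))` there is a nonzero
idempotent direction `E(v) = λv`, `λ ≠ 0`; consequently the system admits a solution whose
maximal interval of definition is strictly contained in `ℝ`, and `E` is not complete. -/
theorem eulerArnold_case2_incomplete
    (a b : ℝ) (hb : b ≠ 0) :
    (∃ (v₁ v₂ v₃ lam : ℝ), ¬(v₁ = 0 ∧ v₂ = 0 ∧ v₃ = 0) ∧ lam ≠ 0 ∧
      b * (v₂^2 + v₃^2) = lam * v₁ ∧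
      v₁ * (a * v₃ - b * v₂) = lam * v₂ ∧
      v₁ * (a * v₂ + b * v₃) = lam * v₃) ∧
    ¬ (∀ w₁ w₂ w₃ : ℝ, ∃ z₁ z₂ z₃ : ℝ → ℝ,
        z₁ 0 = w₁ ∧ z₂ 0 = w₂ ∧ z₃ 0 = w₃ ∧
        (∀ t : ℝ, HasDerivAt z₁ (b * ((z₂ t)^2 + (z₃ t)^2)) t) ∧
        (∀ t : ℝ, HasDerivAt z₂ (z₁ t * (a * z₃ t - b * z₂ t)) t) ∧
        (∀ t : ℝ, HasDerivAt z₃ (z₁ t * (a * z₂ t + b * z₃ t)) t)) := by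
  obtain ⟨v₁, v₂, v₃, lam, hv₁, hlam, e₁, e₂, e₃⟩ := exists_eulerArnold_eigenvector a hb
  refine ⟨⟨v₁, v₂, v₃, lam, fun h => hv₁ h.1, hlam, e₁, e₂, e₃⟩, fun hglobal => ?_⟩
  obtain ⟨z₁, z₂, z₃, h₁, h₂, h₃, hz₁, hz₂, hz₃⟩ := hglobal b 0 b
  refine false_of_first_integral_nonpos hz₁ hz₂ hz₃ ?_ ?_
  · simp [h₁, h₂, h₃]
  · simpa [h₁] using mul_self_pos.mpr hb
end

section
/- Let E be the complex vector field on ℂ³ given by E(z₁,z₂,z₃) = (a z₂z₃, b z₁z₃, (a+b) z₁z₂) with a, b ∈ ℂ. If a·b·(a+b) = 0, then every local holomorphic solution of ż = E(z) extends to an entire solution z: ℂ → ℂ³; that is, E is a complete holomorphic vector field on ℂ³. -/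
/-! The field is invariant under a cyclic permutation of coordinates and coefficients, so we may
assume that the coefficient of `ż₁` vanishes. Then `z₁` is constant and `(z₂, z₃)` solves a linear
system `ẋ = A x` with constant coefficients, whose solutions `t ↦ exp ((t - t₀) • A) x(t₀)` are
entire. -/

open Set NormedSpace

section LinearODE

variable {𝕂 E : Type*} [RCLike 𝕂] [NormedAddCommGroup E] [NormedSpace 𝕂 E] [CompleteSpace E]

theorem hasDerivAt_exp_smul_apply (A : E →L[𝕂] E) (v : E) (t : 𝕂) :
    HasDerivAt (fun u : 𝕂 => exp (u • A) v) (A (exp (t • A) v)) t := by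
  simpa using (hasDerivAt_exp_smul_const' A t).clm_apply (hasDerivAt_const t v)

theorem IsOpen.eqOn_exp_smul_apply_of_hasDerivAt {s : Set 𝕂} (hs : IsOpen s)
    (hs' : IsPreconnected s) {t₀ : 𝕂} (ht₀ : t₀ ∈ s) {A : E →L[𝕂] E} {x : 𝕂 → E}
    (hx : ∀ t ∈ s, HasDerivAt x (A (x t)) t) :
    EqOn x (fun t => exp ((t - t₀) • A) (x t₀)) s := by
  have hg : ∀ t ∈ s, HasDerivAt (fun u => exp ((-u) • A) (x u)) 0 t := by
    intro t ht
    have he := (hasDerivAt_exp_smul_const A (-t)).scomp t (hasDerivAt_neg t)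
    simpa using he.clm_apply (hx t ht)
  intro t ht
  have hconst : exp ((-t) • A) (x t) = exp ((-t₀) • A) (x t₀) :=
    hs.is_const_of_deriv_eq_zero hs'
      (fun u hu => (hg u hu).differentiableAt.differentiableWithinAt)
      (fun u hu => (hg u hu).deriv) ht ht₀
  have hsplit : ∀ u w : 𝕂, exp ((u + w) • A) = exp (u • A) * exp (w • A) := fun u w => by
    let := NormedAlgebra.restrictScalars ℚ 𝕂 (E →L[𝕂] E)
    rw [add_smul, exp_add_of_commute ((Commute.refl A).smul_left u |>.smul_right w)]
  calc x t = exp ((t + -t) • A) (x t) := by simp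
    _ = exp ((t - t₀) • A) (x t₀) := by
      rw [hsplit, mul_apply_eq_comp, hconst, ← mul_apply_eq_comp, ← hsplit, ← sub_eq_add_neg]

theorem IsOpen.exists_eqOn_forall_hasDerivAt_clm_apply {s : Set 𝕂} (hs : IsOpen s)
    (hs' : IsPreconnected s) {t₀ : 𝕂} (ht₀ : t₀ ∈ s) {A : E →L[𝕂] E} {x : 𝕂 → E}
    (hx : ∀ t ∈ s, HasDerivAt x (A (x t)) t) :
    ∃ y : 𝕂 → E, EqOn y x s ∧ ∀ t, HasDerivAt y (A (y t)) t :=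
  ⟨fun t => exp ((t - t₀) • A) (x t₀), (hs.eqOn_exp_smul_apply_of_hasDerivAt hs' ht₀ hx).symm,
    fun t => by simpa using (hasDerivAt_exp_smul_apply A (x t₀) (t - t₀)).comp_sub_const t t₀⟩

end LinearODE

section EulerArnold

variable {𝕂 : Type*} [RCLike 𝕂]

theorem IsOpen.exists_eqOn_forall_hasDerivAt_of_linear_pair {s : Set 𝕂} (hs : IsOpen s)
    (hs' : IsPreconnected s) {t₀ : 𝕂} (ht₀ : t₀ ∈ s) {α β : 𝕂} {u v : 𝕂 → 𝕂}
    (hu : ∀ t ∈ s, HasDerivAt u (α * v t) t) (hv : ∀ t ∈ s, HasDerivAt v (β * u t) t) :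
    ∃ U V : 𝕂 → 𝕂, EqOn U u s ∧ EqOn V v s ∧
      (∀ t, HasDerivAt U (α * V t) t) ∧ ∀ t, HasDerivAt V (β * U t) t := by
  let A : 𝕂 × 𝕂 →L[𝕂] 𝕂 × 𝕂 :=
    (α • ContinuousLinearMap.snd 𝕂 𝕂 𝕂).prod (β • ContinuousLinearMap.fst 𝕂 𝕂 𝕂)
  obtain ⟨y, hyx, hy⟩ := hs.exists_eqOn_forall_hasDerivAt_clm_apply hs' ht₀ (A := A)
    (x := fun t => (u t, v t)) fun t ht => by simpa [A] using (hu t ht).prodMk (hv t ht)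
  refine ⟨fun t => (y t).1, fun t => (y t).2, fun t ht => congrArg Prod.fst (hyx ht),
    fun t ht => congrArg Prod.snd (hyx ht), fun t => ?_, fun t => ?_⟩
  · exact hasFDerivAt_fst.comp_hasDerivAt t (hy t)
  · exact hasFDerivAt_snd.comp_hasDerivAt t (hy t)

def IsEulerArnoldSolutionOn (p q r : 𝕂) (s : Set 𝕂) (z₁ z₂ z₃ : 𝕂 → 𝕂) : Prop :=
  ∀ t ∈ s, HasDerivAt z₁ (p * z₂ t * z₃ t) t ∧ HasDerivAt z₂ (q * z₁ t * z₃ t) t ∧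
    HasDerivAt z₃ (r * z₁ t * z₂ t) t

namespace IsEulerArnoldSolutionOn

variable {p q r : 𝕂} {s : Set 𝕂} {z₁ z₂ z₃ : 𝕂 → 𝕂}

theorem rotate (h : IsEulerArnoldSolutionOn p q r s z₁ z₂ z₃) :
    IsEulerArnoldSolutionOn q r p s z₂ z₃ z₁ := fun t ht =>
  let ⟨h₁, h₂, h₃⟩ := h t ht
  ⟨h₂.congr_deriv (by ring), h₃.congr_deriv (by ring), h₁⟩

theorem exists_extension_of_first_coeff_eq_zero (hs : IsOpen s) (hs' : IsPreconnected s) {t₀ : 𝕂}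
    (ht₀ : t₀ ∈ s) (h : IsEulerArnoldSolutionOn 0 q r s z₁ z₂ z₃) :
    ∃ w₁ w₂ w₃ : 𝕂 → 𝕂, EqOn w₁ z₁ s ∧ EqOn w₂ z₂ s ∧ EqOn w₃ z₃ s ∧
      IsEulerArnoldSolutionOn 0 q r univ w₁ w₂ w₃ := by
  have hz₁ : ∀ t ∈ s, z₁ t = z₁ t₀ := fun t ht =>
    hs.is_const_of_deriv_eq_zero hs'
      (fun u hu => (h u hu).1.differentiableAt.differentiableWithinAt)
      (fun u hu => by simpa using (h u hu).1.deriv) ht ht₀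
  obtain ⟨U, V, hU, hV, hU', hV'⟩ := hs.exists_eqOn_forall_hasDerivAt_of_linear_pair hs' ht₀
    (α := q * z₁ t₀) (β := r * z₁ t₀)
    (fun t ht => (h t ht).2.1.congr_deriv (by rw [hz₁ t ht]))
    (fun t ht => (h t ht).2.2.congr_deriv (by rw [hz₁ t ht]))
  exact ⟨fun _ => z₁ t₀, U, V, fun t ht => (hz₁ t ht).symm, hU, hV,
    fun t _ => ⟨(hasDerivAt_const t _).congr_deriv (by ring), hU' t, hV' t⟩⟩

theorem exists_extension (hs : IsOpen s) (hs' : IsPreconnected s) {t₀ : 𝕂} (ht₀ : t₀ ∈ s)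
    (hpqr : p * q * r = 0) (h : IsEulerArnoldSolutionOn p q r s z₁ z₂ z₃) :
    ∃ w₁ w₂ w₃ : 𝕂 → 𝕂, EqOn w₁ z₁ s ∧ EqOn w₂ z₂ s ∧ EqOn w₃ z₃ s ∧
      IsEulerArnoldSolutionOn p q r univ w₁ w₂ w₃ := by
  rcases mul_eq_zero.mp hpqr with hpq | rfl
  · rcases mul_eq_zero.mp hpq with rfl | rfl
    · exact h.exists_extension_of_first_coeff_eq_zero hs hs' ht₀
    · obtain ⟨w₂, w₃, w₁, h₂, h₃, h₁, hw⟩ :=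
        h.rotate.exists_extension_of_first_coeff_eq_zero hs hs' ht₀
      exact ⟨w₁, w₂, w₃, h₁, h₂, h₃, hw.rotate.rotate⟩
  · obtain ⟨w₃, w₁, w₂, h₃, h₁, h₂, hw⟩ :=
      h.rotate.rotate.exists_extension_of_first_coeff_eq_zero hs hs' ht₀
    exact ⟨w₁, w₂, w₃, h₁, h₂, h₃, hw.rotate⟩

end IsEulerArnoldSolutionOn

end EulerArnold

/-- For `a, b ∈ ℂ` with `ab(a+b) = 0`, the holomorphic vector field
`E(z) = (a z₂z₃, b z₁z₃, (a+b) z₁z₂)` on `ℂ³` is complete: every local holomorphic solution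
of `ż = E(z)` (on a ball around a point) extends to an entire solution `ℂ → ℂ³`. -/
theorem eulerArnold_SL2C_complete_of_degenerate
    (a b : ℂ) (hab : a * b * (a + b) = 0) :
    ∀ (t₀ : ℂ) (r : ℝ), 0 < r →
      ∀ z₁ z₂ z₃ : ℂ → ℂ,
        (∀ t ∈ Metric.ball t₀ r, HasDerivAt z₁ (a * z₂ t * z₃ t) t) →
        (∀ t ∈ Metric.ball t₀ r, HasDerivAt z₂ (b * z₁ t * z₃ t) t) →
        (∀ t ∈ Metric.ball t₀ r, HasDerivAt z₃ ((a + b) * z₁ t * z₂ t) t) →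
        ∃ w₁ w₂ w₃ : ℂ → ℂ,
          (∀ t ∈ Metric.ball t₀ r, w₁ t = z₁ t ∧ w₂ t = z₂ t ∧ w₃ t = z₃ t) ∧
          (∀ t : ℂ, HasDerivAt w₁ (a * w₂ t * w₃ t) t) ∧
          (∀ t : ℂ, HasDerivAt w₂ (b * w₁ t * w₃ t) t) ∧
          (∀ t : ℂ, HasDerivAt w₃ ((a + b) * w₁ t * w₂ t) t) := by
  intro t₀ r hr z₁ z₂ z₃ h₁ h₂ h₃
  obtain ⟨w₁, w₂, w₃, hw₁, hw₂, hw₃, hw⟩ :=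
    IsEulerArnoldSolutionOn.exists_extension Metric.isOpen_ball
      (convex_ball t₀ r).isPreconnected (Metric.mem_ball_self hr) hab
      fun t ht => ⟨h₁ t ht, h₂ t ht, h₃ t ht⟩
  exact ⟨w₁, w₂, w₃, fun t ht => ⟨hw₁ ht, hw₂ ht, hw₃ ht⟩, fun t => (hw t trivial).1,
    fun t => (hw t trivial).2.1, fun t => (hw t trivial).2.2⟩
end
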